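/- arXiv:1601.01544 — 5 statements merged into one kernel-verified Lean document; each statement's English description precedes it below -/
import Mathlib

section
/- Let λ > 0 and fix real numbers t₁, t₂. Then the limit, as t₀ → −∞, of ∫_{t₀}^{min(t₁,t₂)} (t₁ − u)·e^{−λ(t₁−u)}·(t₂ − u)·e^{−λ(t₂−u)} du exists and equals e^{−λ|t₂−t₁|}(1 + λ|t₂−t₁|)/(4λ³), the Matérn covariance function with ν = 3/2; in particular the limit depends only on |t₂ − t₁|. -/
open Filter

private lemma pow_mul_exp_atBot (k : ℝ) (hk : 0 < k) (n : ℕ) :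
    Tendsto (fun t : ℝ => t ^ n * Real.exp (k * t)) atBot (nhds 0) := by
  have h1 : Tendsto (fun t : ℝ => k * -t) atBot atTop :=
    tendsto_neg_atBot_atTop.const_mul_atTop hk
  have h2 := (Real.tendsto_pow_mul_exp_neg_atTop_nhds_zero n).comp h1
  have h3 := h2.const_mul (((-k) ^ n)⁻¹)
  rw [mul_zero] at h3
  refine h3.congr fun t => ?_
  have hkn : ((-k) ^ n) ≠ 0 := pow_ne_zero _ (by linarith)
  have : k * -t = -k * t := by ring
  simp only [Function.comp, this, mul_pow, neg_neg]
  field_simp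

private lemma quad_mul_exp_atBot (a b c k : ℝ) (hk : 0 < k) :
    Tendsto (fun t : ℝ => (a * t ^ 2 + b * t + c) * Real.exp (k * t)) atBot (nhds 0) := by
  have H := (((pow_mul_exp_atBot k hk 2).const_mul a).add
      ((pow_mul_exp_atBot k hk 1).const_mul b)).add
      ((pow_mul_exp_atBot k hk 0).const_mul c)
  simp only [mul_zero, add_zero] at H
  exact H.congr fun t => by ring

private lemma matern_aux (lam t₁ t₂ : ℝ) (hlam : 0 < lam) (h : t₁ ≤ t₂) :
    Tendsto
      (fun t₀ : ℝ => ∫ u in t₀..t₁,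
        (t₁ - u) * Real.exp (-lam * (t₁ - u)) * ((t₂ - u) * Real.exp (-lam * (t₂ - u))))
      atBot
      (nhds (Real.exp (-lam * (t₂ - t₁)) * (1 + lam * (t₂ - t₁)) / (4 * lam ^ 3))) := by
  have hl : lam ≠ 0 := ne_of_gt hlam
  set a : ℝ := 1 / (2 * lam) with ha
  set b : ℝ := -(t₁ + t₂ + 1 / lam) / (2 * lam) with hb
  set c : ℝ := (t₁ * t₂ + (t₁ + t₂ + 1 / lam) / (2 * lam)) / (2 * lam) with hc
  set K : ℝ := Real.exp (-(lam * (t₁ + t₂))) with hK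
  set F : ℝ → ℝ := fun u => (a * u ^ 2 + b * u + c) * (Real.exp (2 * lam * u) * K) with hF
  have hexp : ∀ u : ℝ, Real.exp (-lam * (t₁ - u)) * Real.exp (-lam * (t₂ - u))
      = Real.exp (2 * lam * u) * K := by
    intro u
    rw [hK, ← Real.exp_add, ← Real.exp_add]
    congr 1
    ring
  have hderiv : ∀ u : ℝ, HasDerivAt F
      ((t₁ - u) * Real.exp (-lam * (t₁ - u)) * ((t₂ - u) * Real.exp (-lam * (t₂ - u)))) u := by
    intro u
    have hQ : HasDerivAt (fun u : ℝ => a * u ^ 2 + b * u + c) (2 * a * u + b) u := by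
      have h1 : HasDerivAt (fun u : ℝ => a * u ^ 2) (a * (2 * u)) u :=
        (hasDerivAt_pow 2 u).const_mul a |>.congr_deriv (by push_cast; ring)
      have h2 : HasDerivAt (fun u : ℝ => b * u) b u := (hasDerivAt_id u).const_mul b |>.congr_deriv (by ring)
      have := (h1.add h2).add_const c
      exact this.congr_deriv (by ring)
    have hE : HasDerivAt (fun u : ℝ => Real.exp (2 * lam * u) * K)
        (2 * lam * Real.exp (2 * lam * u) * K) u := by
      have h1 : HasDerivAt (fun u : ℝ => 2 * lam * u) (2 * lam) u :=
        (hasDerivAt_id u).const_mul (2 * lam) |>.congr_deriv (by ring)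
      have := (h1.exp).mul_const K
      exact this.congr_deriv (by ring)
    have := hQ.mul hE
    refine this.congr_deriv ?_
    have hrw : (t₁ - u) * Real.exp (-lam * (t₁ - u)) * ((t₂ - u) * Real.exp (-lam * (t₂ - u)))
        = (t₁ - u) * (t₂ - u) * (Real.exp (-lam * (t₁ - u)) * Real.exp (-lam * (t₂ - u))) := by
      ring
    rw [hrw, hexp u, ha, hb, hc]
    field_simp
    ring
  have hcont : Continuous fun u : ℝ =>
      (t₁ - u) * Real.exp (-lam * (t₁ - u)) * ((t₂ - u) * Real.exp (-lam * (t₂ - u))) := by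
    fun_prop
  have hint : ∀ t₀ : ℝ, (∫ u in t₀..t₁,
      (t₁ - u) * Real.exp (-lam * (t₁ - u)) * ((t₂ - u) * Real.exp (-lam * (t₂ - u))))
      = F t₁ - F t₀ := fun t₀ =>
    intervalIntegral.integral_eq_sub_of_hasDerivAt (fun u _ => hderiv u)
      (hcont.intervalIntegrable _ _)
  have h0 : Tendsto F atBot (nhds 0) := by
    have := (quad_mul_exp_atBot a b c (2 * lam) (by positivity)).mul_const K
    rw [zero_mul] at this
    exact this.congr fun t => by rw [hF]; ring
  have hlim : Tendsto (fun t₀ : ℝ => F t₁ - F t₀) atBot (nhds (F t₁ - 0)) :=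
    tendsto_const_nhds.sub h0
  have hval : F t₁ - 0 = Real.exp (-lam * (t₂ - t₁)) * (1 + lam * (t₂ - t₁)) / (4 * lam ^ 3) := by
    simp only [hF, hK, sub_zero]
    rw [← Real.exp_add]
    have : 2 * lam * t₁ + -(lam * (t₁ + t₂)) = -lam * (t₂ - t₁) := by ring
    rw [this, ha, hb, hc]
    field_simp
    ring
  rw [hval] at hlim
  exact hlim.congr fun t₀ => (hint t₀).symm

/-- As the initial time `t₀ → -∞`, the covariance of the Matérn ν = 3/2
state-space model converges to the stationary Matérn ν = 3/2 kernel,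
which depends only on `|t₂ - t₁|`. -/
theorem matern32_stationary_limit (lam t₁ t₂ : ℝ) (hlam : 0 < lam) :
    Tendsto
      (fun t₀ : ℝ => ∫ u in t₀..(min t₁ t₂),
        (t₁ - u) * Real.exp (-lam * (t₁ - u)) * ((t₂ - u) * Real.exp (-lam * (t₂ - u))))
      atBot
      (nhds (Real.exp (-lam * |t₂ - t₁|) * (1 + lam * |t₂ - t₁|) / (4 * lam ^ 3))) := by
  rcases le_total t₁ t₂ with h | h
  · rw [min_eq_left h, abs_of_nonneg (sub_nonneg.2 h)]
    exact matern_aux lam t₁ t₂ hlam h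
  · rw [min_eq_right h, abs_of_nonpos (sub_nonpos.2 h),
      show -(t₂ - t₁) = t₁ - t₂ by ring]
    have H := matern_aux lam t₂ t₁ hlam h
    exact H.congr fun t₀ => intervalIntegral.integral_congr fun u _ => by ring
end

section
/- Let λ > 0 and let s be a complex number with |Re(s)| < λ. Then the bilateral Laplace transform of the Matérn ν = 3/2 kernel satisfies ∫_ℝ e^{−sτ} · (1/(4λ³)) · e^{−λ|τ|}(1 + λ|τ|) dτ = 1/((λ − s)²(λ + s)²). -/
open Complex MeasureTheory Set Filter

private lemma matern_tendsto_aux {a : ℂ} (ha : 0 < a.re) (c : ℝ) :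
    Tendsto (fun t : ℝ => Complex.exp (-a * t) * (1 + (c : ℂ) * t)) atTop (nhds 0) := by
  have hbound : ∀ t : ℝ, 0 ≤ t →
      ‖Complex.exp (-a * t) * (1 + (c : ℂ) * t)‖ ≤ (1 + |c| * t) * Real.exp (-a.re * t) := by
    intro t ht
    rw [norm_mul, Complex.norm_exp]
    have h1 : (-a * (t : ℂ)).re = -a.re * t := by simp
    rw [h1, mul_comm]
    have hb : ‖(1 : ℂ) + (c : ℂ) * t‖ ≤ 1 + |c| * t := by
      calc ‖(1 : ℂ) + (c : ℂ) * t‖ ≤ ‖(1:ℂ)‖ + ‖(c : ℂ) * (t : ℂ)‖ := norm_add_le _ _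
        _ = 1 + |c| * t := by
            simp [norm_mul, Complex.norm_real, Real.norm_eq_abs, _root_.abs_of_nonneg ht]
    exact mul_le_mul_of_nonneg_right hb (Real.exp_pos _).le
  have h2 : Tendsto (fun t : ℝ => (1 + |c| * t) * Real.exp (-a.re * t)) atTop (nhds 0) := by
    have hexp : Tendsto (fun t : ℝ => Real.exp (-a.re * t)) atTop (nhds 0) := by
      apply Real.tendsto_exp_atBot.comp
      exact Tendsto.const_mul_atTop_of_neg (neg_lt_zero.mpr ha) tendsto_id
    have hpoly : Tendsto (fun t : ℝ => t * Real.exp (-a.re * t)) atTop (nhds 0) := by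
      have := tendsto_rpow_mul_exp_neg_mul_atTop_nhds_zero 1 a.re ha
      simpa [Real.rpow_one] using this
    have := (hexp.add (hpoly.const_mul |c|))
    simp only [add_zero, mul_zero] at this
    convert this using 2 with t
    ring
  rw [tendsto_zero_iff_norm_tendsto_zero]
  apply squeeze_zero' (Eventually.of_forall fun t => norm_nonneg _)
  · filter_upwards [eventually_ge_atTop (0:ℝ)] with t ht using hbound t ht
  · exact h2

private lemma matern_integrable_aux {a : ℂ} (ha : 0 < a.re) (c : ℝ) :
    IntegrableOn (fun t : ℝ => Complex.exp (-a * t) * (1 + (c : ℂ) * t)) (Ioi 0) := by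
  have hb : (0:ℝ) < a.re / 2 := by linarith
  apply Iff.mp integrableOn_Ici_iff_integrableOn_Ioi
  have hcont : ContinuousOn (fun t : ℝ => Complex.exp (-a * t) * (1 + (c : ℂ) * t)) (Ici 0) := by
    fun_prop
  apply (hcont.locallyIntegrableOn measurableSet_Ici).integrableOn_of_isBigO_atTop
    (g := fun t => Real.exp (-(a.re/2) * t))
  · -- isBigO
    rw [Asymptotics.isBigO_iff]
    refine ⟨1, ?_⟩
    have h0 : Tendsto (fun t : ℝ => Complex.exp (-(a.re/2 : ℂ) * t) * (1 + (c : ℂ) * t))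
        atTop (nhds 0) := matern_tendsto_aux (by simpa using hb) c
    have h1 : ∀ᶠ t : ℝ in atTop,
        ‖Complex.exp (-(a.re/2 : ℂ) * t) * (1 + (c : ℂ) * t)‖ ≤ 1 := by
      have := h0.norm
      simp only [norm_zero] at this
      exact this.eventually_le_const one_pos
    filter_upwards [h1, eventually_ge_atTop (0:ℝ)] with t h1t ht
    rw [norm_mul, Complex.norm_exp] at h1t ⊢
    have e1 : (-a * (t : ℂ)).re = -a.re * t := by simp
    have e2 : (-(a.re/2 : ℂ) * (t : ℂ)).re = -(a.re/2) * t := by simp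
    rw [e1]
    rw [e2] at h1t
    have key : Real.exp (-a.re * t) = Real.exp (-(a.re/2) * t) * Real.exp (-(a.re/2) * t) := by
      rw [← Real.exp_add]; ring_nf
    rw [key, mul_assoc, one_mul, Real.norm_eq_abs, abs_of_pos (Real.exp_pos _)]
    calc Real.exp (-(a.re/2) * t) * (Real.exp (-(a.re/2) * t) * ‖1 + (c:ℂ) * t‖)
        ≤ Real.exp (-(a.re/2) * t) * 1 :=
          mul_le_mul_of_nonneg_left h1t (Real.exp_pos _).le
      _ = Real.exp (-(a.re/2) * t) := mul_one _
  · exact ⟨Ioi 0, Ioi_mem_atTop 0, exp_neg_integrableOn_Ioi 0 hb⟩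

private lemma matern_integral_aux {a : ℂ} (ha : 0 < a.re) (c : ℝ) :
    ∫ t in Ioi (0:ℝ), Complex.exp (-a * t) * (1 + (c : ℂ) * t) = 1 / a + c / a ^ 2 := by
  have ha0 : a ≠ 0 := fun h => by simp [h] at ha
  set F : ℝ → ℂ := fun t => -(Complex.exp (-a * t) * (1 + (c : ℂ) * t)) / a
      - (c : ℂ) * Complex.exp (-a * t) / a ^ 2 with hF
  have hderiv : ∀ x : ℝ, x ∈ Ici (0:ℝ) →
      HasDerivAt F (Complex.exp (-a * x) * (1 + (c : ℂ) * x)) x := by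
    intro x _
    have hexp : HasDerivAt (fun t : ℝ => Complex.exp (-a * t)) (-a * Complex.exp (-a * x)) x := by
      have h1 : HasDerivAt (fun t : ℝ => -a * (t : ℂ)) (-a) x := by
        simpa using (Complex.ofRealCLM.hasDerivAt (x := x)).const_mul (-a)
      simpa [mul_comm] using h1.cexp
    have hlin : HasDerivAt (fun t : ℝ => (1 : ℂ) + (c : ℂ) * t) (c : ℂ) x := by
      simpa using ((Complex.ofRealCLM.hasDerivAt (x := x)).const_mul (c : ℂ)).const_add 1
    have hprod := hexp.mul hlin
    have := ((hprod.neg.div_const a).sub ((hexp.const_mul (c : ℂ)).div_const (a ^ 2)))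
    refine HasDerivAt.congr_deriv (f := F) this ?_
    field_simp
    ring
  have htend : Tendsto F atTop (nhds 0) := by
    have h1 := matern_tendsto_aux ha c
    have h2 : Tendsto (fun t : ℝ => Complex.exp (-a * t)) atTop (nhds 0) := by
      simpa using matern_tendsto_aux ha 0
    have := (h1.neg.div_const a).sub ((h2.const_mul (c : ℂ)).div_const (a ^ 2))
    simpa [hF, neg_mul] using this
  have := integral_Ioi_of_hasDerivAt_of_tendsto' hderiv (matern_integrable_aux ha c) htend
  rw [this, hF]
  simp only [Complex.ofReal_zero, mul_zero, neg_zero, Complex.exp_zero]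
  field_simp
  ring

/-- Bilateral Laplace transform of the Matérn ν = 3/2 kernel: for
`|Re s| < λ`,
`∫ℝ e^{-sτ} (1/(4λ³)) e^{-λ|τ|} (1 + λ|τ|) dτ = 1/((λ-s)²(λ+s)²)`. -/
theorem matern32_bilateral_laplace (lam : ℝ) (hlam : 0 < lam)
    (s : ℂ) (hs : |s.re| < lam) :
    ∫ τ : ℝ, Complex.exp (-s * τ)
        * ((1 / (4 * (lam : ℂ) ^ 3)) * Real.exp (-lam * |τ|) * (1 + lam * |τ|))
      = 1 / (((lam : ℂ) - s) ^ 2 * ((lam : ℂ) + s) ^ 2) := by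
  rw [abs_lt] at hs
  have hps : 0 < ((lam : ℂ) + s).re := by simpa using by linarith [hs.1]
  have hms : 0 < ((lam : ℂ) - s).re := by simpa using by linarith [hs.2]
  set f : ℝ → ℂ := fun τ => Complex.exp (-s * τ)
      * ((1 / (4 * (lam : ℂ) ^ 3)) * Real.exp (-lam * |τ|) * (1 + lam * |τ|)) with hf
  -- function on positive half line with a : modeled by g a τ below
  have key : ∀ a : ℂ, ∀ τ : ℝ, 0 ≤ τ →
      Complex.exp (-a * τ) * ((1 / (4 * (lam : ℂ) ^ 3)) * Real.exp (-lam * τ) * (1 + lam * τ))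
      = (1 / (4 * (lam : ℂ) ^ 3)) *
          (Complex.exp (-((lam : ℂ) + a) * τ) * (1 + (lam : ℂ) * τ)) := by
    intro a τ hτ
    have h1 : (Real.exp (-lam * τ) : ℂ) = Complex.exp (-(lam : ℂ) * τ) := by
      rw [Complex.ofReal_exp]
      push_cast
      ring_nf
    have h2 : Complex.exp (-((lam : ℂ) + a) * τ)
        = Complex.exp (-a * τ) * Complex.exp (-(lam : ℂ) * τ) := by
      rw [← Complex.exp_add]
      ring_nf
    rw [h1, h2]
    ring
  have hIoi : ∫ τ in Ioi (0:ℝ), f τ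
      = (1 / (4 * (lam : ℂ) ^ 3)) * (1 / ((lam : ℂ) + s) + lam / ((lam : ℂ) + s) ^ 2) := by
    rw [setIntegral_congr_fun measurableSet_Ioi
      (g := fun τ : ℝ => (1 / (4 * (lam : ℂ) ^ 3)) *
          (Complex.exp (-((lam : ℂ) + s) * τ) * (1 + (lam : ℂ) * τ)))
      (fun τ hτ => by
        rw [hf]
        simp only
        rw [_root_.abs_of_nonneg (le_of_lt hτ)]
        exact key s τ (le_of_lt hτ))]
    rw [MeasureTheory.integral_const_mul, matern_integral_aux hps lam]
  have hIic : ∫ τ in Iic (0:ℝ), f τ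
      = (1 / (4 * (lam : ℂ) ^ 3)) * (1 / ((lam : ℂ) - s) + lam / ((lam : ℂ) - s) ^ 2) := by
    have : ∫ τ in Iic (0:ℝ), f τ = ∫ τ in Ioi (0:ℝ), f (-τ) := by
      rw [integral_comp_neg_Ioi]
      norm_num
    rw [this]
    rw [setIntegral_congr_fun measurableSet_Ioi
      (g := fun τ : ℝ => (1 / (4 * (lam : ℂ) ^ 3)) *
          (Complex.exp (-((lam : ℂ) - s) * τ) * (1 + (lam : ℂ) * τ)))
      (fun τ hτ => by
        rw [hf]
        simp only
        rw [abs_neg, _root_.abs_of_nonneg (le_of_lt hτ)]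
        have := key (-s) τ (le_of_lt hτ)
        push_cast at this ⊢
        rw [show ((lam:ℂ) - s) = (lam : ℂ) + (-s) by ring, ← this]
        ring_nf)]
    rw [MeasureTheory.integral_const_mul, matern_integral_aux hms lam]
  have hintIoi : IntegrableOn f (Ioi 0) := by
    rw [integrableOn_congr_fun (g := fun τ : ℝ => (1 / (4 * (lam : ℂ) ^ 3)) *
          (Complex.exp (-((lam : ℂ) + s) * τ) * (1 + (lam : ℂ) * τ)))
      (fun τ hτ => by
        rw [hf]; simp only
        rw [_root_.abs_of_nonneg (le_of_lt hτ)]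
        exact key s τ (le_of_lt hτ)) measurableSet_Ioi]
    exact (matern_integrable_aux hps lam).const_mul _
  have hintIic : IntegrableOn f (Iic 0) := by
    have h1 : IntegrableOn (fun τ => f (-τ)) (Ioi 0) := by
      rw [integrableOn_congr_fun (g := fun τ : ℝ => (1 / (4 * (lam : ℂ) ^ 3)) *
            (Complex.exp (-((lam : ℂ) - s) * τ) * (1 + (lam : ℂ) * τ)))
        (fun τ hτ => by
          rw [hf]; simp only
          rw [abs_neg, _root_.abs_of_nonneg (le_of_lt hτ)]
          have := key (-s) τ (le_of_lt hτ)
          push_cast at this ⊢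
          rw [show ((lam:ℂ) - s) = (lam : ℂ) + (-s) by ring, ← this]
          ring_nf) measurableSet_Ioi]
      exact (matern_integrable_aux hms lam).const_mul _
    have h1' : IntegrableOn (fun τ => f (-τ)) (Ici 0) :=
      Iff.mpr integrableOn_Ici_iff_integrableOn_Ioi h1
    have h_map_neg : (volume.restrict (Ici (0:ℝ))).map Neg.neg = volume.restrict (Iic 0) := by
      conv => rhs; rw [← Measure.map_neg_eq_self (volume : Measure ℝ),
        measurableEmbedding_neg.restrict_map]
      simp
    rw [IntegrableOn, ← h_map_neg, measurableEmbedding_neg.integrable_map_iff]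
    exact h1'
  rw [← intervalIntegral.integral_Iic_add_Ioi hintIic hintIoi, hIic, hIoi]
  have hlamc : (lam : ℂ) ≠ 0 := by exact_mod_cast hlam.ne'
  have hms0 : ((lam : ℂ) - s) ≠ 0 := fun h => by
    have : ((lam : ℂ) - s).re = 0 := by rw [h]; simp
    linarith [hms, this ▸ hms]
  have hps0 : ((lam : ℂ) + s) ≠ 0 := fun h => by
    have : ((lam : ℂ) + s).re = 0 := by rw [h]; simp
    linarith [hps, this ▸ hps]
  field_simp [hlamc, hms0, hps0]
  ring
end

section
/- Let a > 0, b ≠ 0 be real numbers, and let t₀, t₁, t₂ be real numbers with t₀ ≤ t₁ and t₀ ≤ t₂, and set m = min(t₁,t₂). Then ∫_{t₀}^{m} (e^{−a(t₁−u)} sin(b(t₁−u))/b) · (e^{−a(t₂−u)} sin(b(t₂−u))/b) du = [ e^{−a(t₁+t₂−2m)}·( a(b·sin(b(t₁+t₂−2m)) − a·cos(b(t₁+t₂−2m))) + (a²+b²)·cos(b(t₁−t₂)) ) − e^{−a(t₁+t₂−2t₀)}·( (a²+b²)·cos(b(t₁−t₂)) + a(b·sin(b(t₁+t₂−2t₀))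 − a·cos(b(t₁+t₂−2t₀))) ) ] / (4·a·b²·(a²+b²)). (This is the non-stationary covariance function of the second-order state-space approximation of the squared exponential kernel with finite initial time t₀.) -/
open Real

lemma sin_mul_sin' (x y : ℝ) :
    Real.sin x * Real.sin y = (Real.cos (x - y) - Real.cos (x + y)) / 2 := by
  rw [Real.cos_sub, Real.cos_add]; ring

/-- Non-stationary covariance function of the second-order state-space
approximation of the squared exponential kernel with finite initial time
`t₀`. -/
theorem se_ss_nonstationary_covariance (a b t₀ t₁ t₂ : ℝ)
    (ha : 0 < a) (hb : b ≠ 0) (h₁ : t₀ ≤ t₁) (h₂ : t₀ ≤ t₂) :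
    ∫ u in t₀..(min t₁ t₂),
        (Real.exp (-a * (t₁ - u)) * Real.sin (b * (t₁ - u)) / b)
          * (Real.exp (-a * (t₂ - u)) * Real.sin (b * (t₂ - u)) / b)
      = (Real.exp (-a * (t₁ + t₂ - 2 * min t₁ t₂))
            * (a * (b * Real.sin (b * (t₁ + t₂ - 2 * min t₁ t₂))
                - a * Real.cos (b * (t₁ + t₂ - 2 * min t₁ t₂)))
              + (a ^ 2 + b ^ 2) * Real.cos (b * (t₁ - t₂)))
          - Real.exp (-a * (t₁ + t₂ - 2 * t₀))
            * ((a ^ 2 + b ^ 2) * Real.cos (b * (t₁ - t₂))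
              + a * (b * Real.sin (b * (t₁ + t₂ - 2 * t₀))
                - a * Real.cos (b * (t₁ + t₂ - 2 * t₀)))))
        / (4 * a * b ^ 2 * (a ^ 2 + b ^ 2)) := by
  have ha' : a ≠ 0 := ha.ne'
  have hab : a ^ 2 + b ^ 2 ≠ 0 := by positivity
  set F : ℝ → ℝ := fun u =>
    Real.exp (-a * (t₁ + t₂ - 2 * u))
      * (a * (b * Real.sin (b * (t₁ + t₂ - 2 * u))
          - a * Real.cos (b * (t₁ + t₂ - 2 * u)))
        + (a ^ 2 + b ^ 2) * Real.cos (b * (t₁ - t₂)))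
      / (4 * a * b ^ 2 * (a ^ 2 + b ^ 2)) with hF
  have key : ∀ u : ℝ, HasDerivAt F
      ((Real.exp (-a * (t₁ - u)) * Real.sin (b * (t₁ - u)) / b)
        * (Real.exp (-a * (t₂ - u)) * Real.sin (b * (t₂ - u)) / b)) u := by
    intro u
    have h1 : HasDerivAt (fun u : ℝ => -a * (t₁ + t₂ - 2 * u)) (2 * a) u := by
      have h : HasDerivAt (fun y : ℝ => 2 * a * y + (-a * (t₁ + t₂))) (2 * a) u := by
        simpa using (hasDerivAt_id' (𝕜 := ℝ) (x := u)).const_mul (2 * a) |>.add_const (-a * (t₁ + t₂))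
      exact h.congr_of_eventuallyEq (Filter.Eventually.of_forall fun x => by ring)
    have h2 : HasDerivAt (fun u : ℝ => b * (t₁ + t₂ - 2 * u)) (-2 * b) u := by
      have h : HasDerivAt (fun y : ℝ => -2 * b * y + b * (t₁ + t₂)) (-2 * b) u := by
        simpa using (hasDerivAt_id' (𝕜 := ℝ) (x := u)).const_mul (-2 * b) |>.add_const (b * (t₁ + t₂))
      exact h.congr_of_eventuallyEq (Filter.Eventually.of_forall fun x => by ring)
    have hexp := (h1.exp)
    have hsin := h2.sin
    have hcos := h2.cos
    have hinner : HasDerivAt (fun u : ℝ =>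
        a * (b * Real.sin (b * (t₁ + t₂ - 2 * u))
          - a * Real.cos (b * (t₁ + t₂ - 2 * u)))
        + (a ^ 2 + b ^ 2) * Real.cos (b * (t₁ - t₂)))
        (a * (b * (Real.cos (b * (t₁ + t₂ - 2 * u)) * (-2 * b))
          - a * (-Real.sin (b * (t₁ + t₂ - 2 * u)) * (-2 * b)))) u := by
      simpa using (((hsin.const_mul b).sub (hcos.const_mul a)).const_mul a).add_const
        ((a ^ 2 + b ^ 2) * Real.cos (b * (t₁ - t₂)))
    have hprod := (hexp.mul hinner).div_const (4 * a * b ^ 2 * (a ^ 2 + b ^ 2))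
    convert hprod using 1
    · rfl
    · rfl
    · rfl
    have hexps : Real.exp (-(a * (t₁ - u))) * Real.exp (-(a * (t₂ - u)))
        = Real.exp (-(a * (t₁ + t₂ - 2 * u))) := by
      rw [← Real.exp_add]; ring_nf
    have hsins := sin_mul_sin' (b * (t₁ - u)) (b * (t₂ - u))
    have e1 : b * (t₁ - u) - b * (t₂ - u) = b * (t₁ - t₂) := by ring
    have e2 : b * (t₁ - u) + b * (t₂ - u) = b * (t₁ + t₂ - 2 * u) := by ring
    rw [e1, e2] at hsins
    field_simp
    rw [mul_comm (t₁ - u) b, mul_comm u 2]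
    linear_combination (4 * (a ^ 2 + b ^ 2)
        * Real.exp (-(a * (t₁ - u))) * Real.exp (-(a * (t₂ - u)))) * hsins
      + (2 * (a ^ 2 + b ^ 2)
        * (Real.cos (b * (t₁ - t₂)) - Real.cos (b * (t₁ + t₂ - 2 * u)))) * hexps
  have hcont : IntervalIntegrable (fun u =>
      (Real.exp (-a * (t₁ - u)) * Real.sin (b * (t₁ - u)) / b)
        * (Real.exp (-a * (t₂ - u)) * Real.sin (b * (t₂ - u)) / b))
      MeasureTheory.volume t₀ (min t₁ t₂) := by
    apply Continuous.intervalIntegrable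
    fun_prop
  have := intervalIntegral.integral_eq_sub_of_hasDerivAt
    (fun u _ => key u) hcont
  rw [this, hF]
  ring
end

section
/- Let a > 0, b ≠ 0 be real numbers and fix real t₁, t₂ with τ = |t₂ − t₁|. Then the limit, as t₀ → −∞, of ∫_{t₀}^{min(t₁,t₂)} (e^{−a(t₁−u)} sin(b(t₁−u))/b) · (e^{−a(t₂−u)} sin(b(t₂−u))/b) du exists and equals e^{−aτ}·(a·b·sin(bτ) + b²·cos(bτ)) / (4·a·b²·(a²+b²)); in particular the limiting covariance depends only on |t₂ − t₁|, i.e. it is stationary. -/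
open Filter

/-- Explicit antiderivative of the product of two damped sines. -/
noncomputable def seF (a b t₁ t₂ : ℝ) (u : ℝ) : ℝ :=
  Real.exp (2*a*u - a*(t₁+t₂)) *
    (Real.cos (b*(t₁-t₂)) / (4*a*b^2)
      + (b * Real.sin (b*(t₁+t₂) - 2*b*u) - a * Real.cos (b*(t₁+t₂) - 2*b*u))
        / (4*b^2*(a^2+b^2)))

theorem seF_hasDerivAt (a b t₁ t₂ : ℝ) (ha : 0 < a) (hb : b ≠ 0) (u : ℝ) :
    HasDerivAt (seF a b t₁ t₂)
      ((Real.exp (-a * (t₁ - u)) * Real.sin (b * (t₁ - u)) / b)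
          * (Real.exp (-a * (t₂ - u)) * Real.sin (b * (t₂ - u)) / b)) u := by
  have ha' : a ≠ 0 := ne_of_gt ha
  have hab : a^2 + b^2 ≠ 0 := by positivity
  have h1 : HasDerivAt (fun u : ℝ => 2*a*u - a*(t₁+t₂)) (2*a) u := by
    simpa using ((hasDerivAt_id u).const_mul (2*a)).sub_const (a*(t₁+t₂))
  have hexp : HasDerivAt (fun u : ℝ => Real.exp (2*a*u - a*(t₁+t₂)))
      (Real.exp (2*a*u - a*(t₁+t₂)) * (2*a)) u := h1.exp
  have h2 : HasDerivAt (fun u : ℝ => b*(t₁+t₂) - 2*b*u) (-(2*b)) u := by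
    simpa using ((hasDerivAt_id u).const_mul (2*b)).const_sub (b*(t₁+t₂))
  have hsin : HasDerivAt (fun u : ℝ => Real.sin (b*(t₁+t₂) - 2*b*u))
      (Real.cos (b*(t₁+t₂) - 2*b*u) * (-(2*b))) u := h2.sin
  have hcos : HasDerivAt (fun u : ℝ => Real.cos (b*(t₁+t₂) - 2*b*u))
      (-Real.sin (b*(t₁+t₂) - 2*b*u) * (-(2*b))) u := h2.cos
  have hbr : HasDerivAt (fun u : ℝ =>
      Real.cos (b*(t₁-t₂)) / (4*a*b^2)
        + (b * Real.sin (b*(t₁+t₂) - 2*b*u) - a * Real.cos (b*(t₁+t₂) - 2*b*u))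
          / (4*b^2*(a^2+b^2)))
      ((b * (Real.cos (b*(t₁+t₂) - 2*b*u) * (-(2*b)))
        - a * (-Real.sin (b*(t₁+t₂) - 2*b*u) * (-(2*b)))) / (4*b^2*(a^2+b^2))) u :=
    (((hsin.const_mul b).sub (hcos.const_mul a)).div_const _).const_add _
  have hD := hexp.mul hbr
  refine hD.congr_deriv ?_
  have hE : Real.exp (-a*(t₁-u)) * Real.exp (-a*(t₂-u))
      = Real.exp (2*a*u - a*(t₁+t₂)) := by
    rw [← Real.exp_add]; ring_nf
  have hT : Real.sin (b*(t₁-u)) * Real.sin (b*(t₂-u))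
      = (Real.cos (b*(t₁-t₂)) - Real.cos (b*(t₁+t₂) - 2*b*u)) / 2 := by
    have h := Real.cos_sub_cos (b*(t₁-t₂)) (b*(t₁+t₂) - 2*b*u)
    rw [show (b*(t₁-t₂) + (b*(t₁+t₂) - 2*b*u))/2 = b*(t₁-u) by ring,
        show (b*(t₁-t₂) - (b*(t₁+t₂) - 2*b*u))/2 = -(b*(t₂-u)) by ring,
        Real.sin_neg] at h
    linarith
  have lhs : (Real.exp (-a * (t₁ - u)) * Real.sin (b * (t₁ - u)) / b)
        * (Real.exp (-a * (t₂ - u)) * Real.sin (b * (t₂ - u)) / b)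
      = Real.exp (2*a*u - a*(t₁+t₂))
        * ((Real.cos (b*(t₁-t₂)) - Real.cos (b*(t₁+t₂) - 2*b*u)) / (2*b^2)) := by
    rw [div_mul_div_comm,
      show Real.exp (-a * (t₁ - u)) * Real.sin (b * (t₁ - u))
          * (Real.exp (-a * (t₂ - u)) * Real.sin (b * (t₂ - u)))
        = (Real.exp (-a*(t₁-u)) * Real.exp (-a*(t₂-u)))
          * (Real.sin (b*(t₁-u)) * Real.sin (b*(t₂-u))) by ring, hE, hT]
    ring
  rw [lhs]
  field_simp
  ring

/-- As the initial time `t₀ → -∞`, the covariance of the second-order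
state-space approximation of the squared exponential kernel converges to a
stationary limit depending only on `τ = |t₂ - t₁|`. -/
theorem se_ss_stationary_limit (a b t₁ t₂ : ℝ) (ha : 0 < a) (hb : b ≠ 0) :
    Tendsto
      (fun t₀ : ℝ => ∫ u in t₀..(min t₁ t₂),
        (Real.exp (-a * (t₁ - u)) * Real.sin (b * (t₁ - u)) / b)
          * (Real.exp (-a * (t₂ - u)) * Real.sin (b * (t₂ - u)) / b))
      atBot
      (nhds (Real.exp (-a * |t₂ - t₁|)
          * (a * b * Real.sin (b * |t₂ - t₁|) + b ^ 2 * Real.cos (b * |t₂ - t₁|))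
          / (4 * a * b ^ 2 * (a ^ 2 + b ^ 2)))) := by
  have ha' : a ≠ 0 := ne_of_gt ha
  have hab : a^2 + b^2 ≠ 0 := by positivity
  set m := min t₁ t₂ with hm_def
  -- the integral equals seF m - seF t₀
  have hint : ∀ t₀ : ℝ, (∫ u in t₀..m,
        (Real.exp (-a * (t₁ - u)) * Real.sin (b * (t₁ - u)) / b)
          * (Real.exp (-a * (t₂ - u)) * Real.sin (b * (t₂ - u)) / b))
      = seF a b t₁ t₂ m - seF a b t₁ t₂ t₀ := by
    intro t₀
    refine intervalIntegral.integral_eq_sub_of_hasDerivAt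
      (fun u _ => seF_hasDerivAt a b t₁ t₂ ha hb u) ?_
    apply Continuous.intervalIntegrable
    fun_prop
  -- seF t₀ → 0 as t₀ → -∞
  have hexp0 : Tendsto (fun t₀ : ℝ => Real.exp (2*a*t₀ - a*(t₁+t₂))) atBot (nhds 0) := by
    apply Real.tendsto_exp_atBot.comp
    apply tendsto_atBot_add_const_right
    exact (tendsto_id (α := ℝ)).const_mul_atBot (by positivity)
  have hF0 : Tendsto (seF a b t₁ t₂) atBot (nhds 0) := by
    apply hexp0.zero_mul_isBoundedUnder_le
    refine isBoundedUnder_of ⟨|Real.cos (b*(t₁-t₂)) / (4*a*b^2)| + (|b| + |a|) / |4*b^2*(a^2+b^2)|, fun x => ?_⟩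
    simp only [Function.comp_apply, Real.norm_eq_abs]
    refine (abs_add_le _ _).trans (add_le_add_right ?_ _)
    rw [abs_div]
    apply div_le_div_of_nonneg_right ?_ (by positivity)
    · refine (abs_sub _ _).trans ?_
      rw [abs_mul, abs_mul]
      have s1 := Real.abs_sin_le_one (b*(t₁+t₂) - 2*b*x)
      have s2 := Real.abs_cos_le_one (b*(t₁+t₂) - 2*b*x)
      have : 0 ≤ |a| := abs_nonneg a
      have : 0 ≤ |b| := abs_nonneg b
      nlinarith
  -- value at m
  have hτ : t₁ + t₂ - 2*m = |t₂ - t₁| := by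
    rcases le_total t₁ t₂ with h | h
    · rw [hm_def, min_eq_left h, abs_of_nonneg (by linarith)]; ring
    · rw [hm_def, min_eq_right h, abs_of_nonpos (by linarith)]; ring
  have hcosΔ : Real.cos (b*(t₁-t₂)) = Real.cos (b*|t₂-t₁|) := by
    rcases abs_cases (t₂ - t₁) with ⟨h, _⟩ | ⟨h, _⟩
    · rw [h, ← Real.cos_neg]; congr 1; ring
    · rw [h]; congr 1; ring
  have hFm : seF a b t₁ t₂ m
      = Real.exp (-a * |t₂ - t₁|)
          * (a * b * Real.sin (b * |t₂ - t₁|) + b ^ 2 * Real.cos (b * |t₂ - t₁|))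
          / (4 * a * b ^ 2 * (a ^ 2 + b ^ 2)) := by
    unfold seF
    rw [show 2*a*m - a*(t₁+t₂) = -a * |t₂-t₁| by rw [← hτ]; ring,
        show b*(t₁+t₂) - 2*b*m = b * |t₂-t₁| by rw [← hτ]; ring, hcosΔ]
    field_simp
    ring
  have : Tendsto (fun t₀ : ℝ => seF a b t₁ t₂ m - seF a b t₁ t₂ t₀) atBot
      (nhds (seF a b t₁ t₂ m - 0)) := tendsto_const_nhds.sub hF0
  rw [sub_zero] at this
  rw [funext hint, ← hFm]
  exact this
end

section
/- Let P be a nonzero polynomial with real coefficients such that P(X) = P(−X) (P is even) and such that for every real ω, the complex evaluation P(iω) is a positive real number. Then there exist a real number q > 0 and a monic polynomial a with real coefficients, all of whose complex roots have strictly negative real part, such that P(X) = q · a(X) · a(−X) as polynomials (equivalently, P(s) = q·a(s)·a(−s) for all complex s). (This is the spectral factorization S_y(s) = H(s)H(−s)q underlying the representation theorem for stationary covariance functions with rational spectral density.) -/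
open Polynomial

namespace SpecAux

lemma aeval_neg_even {P : Polynomial ℝ} (heven : P.comp (-X) = P) (w : ℂ) :
    aeval (-w) P = aeval w P := by
  conv_lhs => rw [← heven]
  rw [aeval_comp]
  simp

lemma nodup_le_roots {P : Polynomial ℝ} (hP : P ≠ 0) {s : Multiset ℂ} (hn : s.Nodup)
    (hr : ∀ z ∈ s, aeval z P = 0) : s ≤ (P.map (algebraMap ℝ ℂ)).roots := by
  classical
  have hmap : P.map (algebraMap ℝ ℂ) ≠ 0 := by
    simpa using (Polynomial.map_ne_zero hP (f := algebraMap ℝ ℂ))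
  rw [Multiset.le_iff_count]
  intro a
  by_cases ha : a ∈ s
  · have h1 : Multiset.count a s = 1 := Multiset.count_eq_one_of_mem hn ha
    rw [h1, count_roots]
    rw [Nat.one_le_iff_ne_zero, ← Nat.pos_iff_ne_zero, rootMultiplicity_pos hmap]
    have := hr a ha
    simp [IsRoot, Polynomial.eval_map, ← aeval_def, this]
  · simp [Multiset.count_eq_zero_of_notMem ha]

lemma dvd_of_nodup_roots {P : Polynomial ℝ} (hP : P ≠ 0) {s : Multiset ℂ} (hn : s.Nodup)
    (hr : ∀ z ∈ s, aeval z P = 0) :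
    (s.map fun a => X - C a).prod ∣ P.map (algebraMap ℝ ℂ) := by
  have hmap : P.map (algebraMap ℝ ℂ) ≠ 0 := by
    simpa using (Polynomial.map_ne_zero hP (f := algebraMap ℝ ℂ))
  exact (Multiset.prod_X_sub_C_dvd_iff_le_roots hmap s).mpr (nodup_le_roots hP hn hr)

lemma step {P : Polynomial ℝ} (hP : P ≠ 0) (heven : P.comp (-X) = P)
    (hpos : ∀ ω : ℝ, ∃ r : ℝ, 0 < r ∧ aeval (Complex.I * ω) P = (r : ℂ))
    (hdeg : 0 < P.natDegree) :
    ∃ d Q : Polynomial ℝ, d.Monic ∧ 0 < d.natDegree ∧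
      (∀ z : ℂ, aeval z d = 0 → z.re < 0) ∧ P = Q * (d * d.comp (-X)) := by
  classical
  have hmap : P.map (algebraMap ℝ ℂ) ≠ 0 := by
    simpa using (Polynomial.map_ne_zero hP (f := algebraMap ℝ ℂ))
  have hdegmap : 0 < (P.map (algebraMap ℝ ℂ)).degree := by
    rw [natDegree_pos_iff_degree_pos] at hdeg
    rwa [degree_map_eq_of_injective (algebraMap ℝ ℂ).injective]
  obtain ⟨z0, hz0⟩ := Complex.exists_root hdegmap
  have hz0' : aeval z0 P = 0 := by
    simpa [IsRoot, Polynomial.eval_map, ← aeval_def] using hz0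
  have hre : ∀ w : ℂ, aeval w P = 0 → w.re ≠ 0 := by
    intro w hw hwre
    obtain ⟨r, hr, hval⟩ := hpos w.im
    have hwim : w = Complex.I * (w.im : ℂ) := by
      apply Complex.ext <;> simp [hwre]
    rw [← hwim, hw] at hval
    have : r = 0 := by exact_mod_cast hval.symm
    exact hr.ne' this
  obtain ⟨z, hz, hzre⟩ : ∃ z : ℂ, aeval z P = 0 ∧ z.re < 0 := by
    rcases lt_or_gt_of_ne (hre z0 hz0') with h | h
    · exact ⟨z0, hz0', h⟩
    · exact ⟨-z0, by rwa [aeval_neg_even heven], by simpa using h⟩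
  have hzne : z ≠ 0 := fun h => by simp [h] at hzre
  by_cases him : z.im = 0
  · -- real root x = z.re < 0
    set x : ℝ := z.re with hx
    have hzx : z = (x : ℂ) := by apply Complex.ext <;> simp [him, hx]
    have hxne : (x : ℂ) ≠ 0 := by exact_mod_cast fun h => hzre.ne (by simp [h])
    -- X^2 - x^2 divides P
    have hs : (({(x : ℂ), -(x : ℂ)} : Multiset ℂ).map fun a => X - C a).prod
        ∣ P.map (algebraMap ℝ ℂ) := by
      apply dvd_of_nodup_roots hP
      · simp only [Multiset.insert_eq_cons, Multiset.nodup_cons, Multiset.mem_singleton,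
          Multiset.nodup_singleton, and_true]
        intro h
        exact hxne (by linear_combination (h : (x:ℂ) = -x) / 2)
      · intro w hw
        simp only [Multiset.insert_eq_cons, Multiset.mem_cons, Multiset.mem_singleton] at hw
        rcases hw with rfl | rfl
        · rwa [← hzx]
        · rw [aeval_neg_even heven, ← hzx]; exact hz
    have hprod : (({(x : ℂ), -(x : ℂ)} : Multiset ℂ).map fun a => X - C a).prod
        = (X ^ 2 - C (x ^ 2) : Polynomial ℝ).map (algebraMap ℝ ℂ) := by
      simp only [Multiset.insert_eq_cons, Multiset.map_cons, Multiset.map_singleton,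
        Multiset.prod_cons, Multiset.prod_singleton, Polynomial.map_sub, Polynomial.map_pow,
        Polynomial.map_X, Polynomial.map_C, map_neg]
      have : (algebraMap ℝ ℂ) (x ^ 2) = ((x : ℂ)) ^ 2 := by norm_cast
      rw [this, map_pow]
      ring
    rw [hprod] at hs
    have hdvd : (X ^ 2 - C (x ^ 2) : Polynomial ℝ) ∣ P := (map_dvd_map' _).mp hs
    obtain ⟨c, hc⟩ := hdvd
    refine ⟨X - C x, -c, monic_X_sub_C x, by simp, ?_, ?_⟩
    · intro w hw
      simp only [map_sub, aeval_X, aeval_C] at hw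
      have h2 : w = (algebraMap ℝ ℂ) x := sub_eq_zero.mp hw
      rw [h2]; simpa using hzre
    · have hcomp : (X - C x).comp (-X) = -X - C x := by
        simp [sub_comp]
      rw [hcomp, hc]
      have : C (x ^ 2) = (C x) ^ 2 := by rw [map_pow]
      rw [this]; ring
  · -- complex root, im ≠ 0
    set x : ℝ := z.re with hx
    set y : ℝ := z.im with hy
    set n : ℝ := x ^ 2 + y ^ 2 with hn
    set d : Polynomial ℝ := X ^ 2 - C (2 * x) * X + C n with hd
    have hadd : ((2 * x : ℝ) : ℂ) = z + (starRingEnd ℂ) z := by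
      rw [Complex.add_conj]
    have hmul : ((n : ℝ) : ℂ) = z * (starRingEnd ℂ) z := by
      rw [Complex.mul_conj]; norm_cast; rw [hn, Complex.normSq_apply, hx, hy]; ring
    have hdc : d.comp (-X) = X ^ 2 + C (2 * x) * X + C n := by
      simp only [hd, sub_comp, add_comp, mul_comp, pow_comp, X_comp, C_comp]
      ring
    have hdm : d.Monic := by rw [hd]; monicity!
    have hdnd : 0 < d.natDegree := by
      have h2 : d.natDegree = 2 := by rw [hd]; compute_degree!
      omega
    -- the four roots are distinct
    have hrene : z.re ≠ 0 := hzre.ne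
    have h1 : z ≠ (starRingEnd ℂ) z := by
      intro h
      have := congrArg Complex.im h
      simp only [Complex.conj_im] at this
      exact him (by linarith)
    have h2 : z ≠ -z := by
      intro h
      have := congrArg Complex.re h
      simp only [Complex.neg_re] at this
      exact hrene (by linarith)
    have h3 : z ≠ -(starRingEnd ℂ) z := by
      intro h
      have := congrArg Complex.re h
      simp only [Complex.neg_re, Complex.conj_re] at this
      exact hrene (by linarith)
    have h4 : (starRingEnd ℂ) z ≠ -z := by
      intro h
      have := congrArg Complex.re h
      simp only [Complex.neg_re, Complex.conj_re] at this
      exact hrene (by linarith)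
    have h5 : (starRingEnd ℂ) z ≠ -(starRingEnd ℂ) z := by
      intro h
      have := congrArg Complex.re h
      simp only [Complex.neg_re, Complex.conj_re] at this
      exact hrene (by linarith)
    have h6 : (-z : ℂ) ≠ -(starRingEnd ℂ) z := fun h => h1 (neg_injective h)
    have hs : (({z, (starRingEnd ℂ) z, -z, -(starRingEnd ℂ) z} : Multiset ℂ).map
        fun a => X - C a).prod ∣ P.map (algebraMap ℝ ℂ) := by
      apply dvd_of_nodup_roots hP
      · simp only [Multiset.insert_eq_cons, Multiset.nodup_cons, Multiset.mem_cons,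
          Multiset.mem_singleton, Multiset.nodup_singleton, and_true]
        refine ⟨?_, ?_, ?_⟩
        · push_neg; exact ⟨h1, h2, h3⟩
        · push_neg; exact ⟨h4, h5⟩
        · exact h6
      · intro w hw
        simp only [Multiset.insert_eq_cons, Multiset.mem_cons, Multiset.mem_singleton] at hw
        rcases hw with rfl | rfl | rfl | rfl
        · exact hz
        · rw [Polynomial.aeval_conj, hz, map_zero]
        · rwa [aeval_neg_even heven]
        · rw [aeval_neg_even heven, Polynomial.aeval_conj, hz, map_zero]
    have hprod : (({z, (starRingEnd ℂ) z, -z, -(starRingEnd ℂ) z} : Multiset ℂ).map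
        fun a => X - C a).prod = (d * d.comp (-X)).map (algebraMap ℝ ℂ) := by
      rw [hdc, hd]
      simp only [Multiset.insert_eq_cons, Multiset.map_cons, Multiset.map_singleton,
        Multiset.prod_cons, Multiset.prod_singleton, Polynomial.map_mul, Polynomial.map_add,
        Polynomial.map_sub, Polynomial.map_pow, Polynomial.map_X, Polynomial.map_C, map_neg]
      have ha : (algebraMap ℝ ℂ) (2 * x) = z + (starRingEnd ℂ) z := hadd
      have hb : (algebraMap ℝ ℂ) n = z * (starRingEnd ℂ) z := hmul
      rw [ha, hb, map_add, map_mul]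
      ring
    rw [hprod] at hs
    have hdvd : d * d.comp (-X) ∣ P := (map_dvd_map' _).mp hs
    obtain ⟨c, hc⟩ := hdvd
    refine ⟨d, c, hdm, hdnd, ?_, by rw [hc]; ring⟩
    intro w hw
    simp only [hd, map_add, map_sub, map_mul, map_pow, aeval_X, aeval_C] at hw
    have hw' : w ^ 2 - ((2 * x : ℝ) : ℂ) * w + ((n : ℝ) : ℂ) = 0 := by
      simpa using hw
    rw [hadd, hmul] at hw'
    have key : (w - z) * (w - (starRingEnd ℂ) z) = 0 := by linear_combination hw'
    rcases mul_eq_zero.mp key with h | h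
    · rw [sub_eq_zero.mp h]; exact hzre
    · rw [sub_eq_zero.mp h, Complex.conj_re]; exact hzre

lemma main_aux : ∀ n : ℕ, ∀ P : Polynomial ℝ, P.natDegree ≤ n → P ≠ 0 →
    P.comp (-X) = P →
    (∀ ω : ℝ, ∃ r : ℝ, 0 < r ∧ aeval (Complex.I * ω) P = (r : ℂ)) →
    ∃ (q : ℝ) (a : Polynomial ℝ), 0 < q ∧ a.Monic ∧
      (∀ z : ℂ, aeval z a = 0 → z.re < 0) ∧
      P = C q * a * a.comp (-X) := by
  intro n
  induction n using Nat.strong_induction_on with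
  | _ n ih =>
    intro P hPn hP heven hpos
    rcases Nat.eq_zero_or_pos P.natDegree with h0 | hpos'
    · obtain ⟨r, hr, hval⟩ := hpos 0
      have hPC : P = C (P.coeff 0) := eq_C_of_natDegree_eq_zero h0
      have hcast : ((P.coeff 0 : ℝ) : ℂ) = (r : ℂ) := by
        rw [hPC] at hval; simpa using hval
      have hc : P.coeff 0 = r := by exact_mod_cast hcast
      refine ⟨P.coeff 0, 1, by rwa [hc], monic_one, by simp, ?_⟩
      rw [one_comp]
      simpa using hPC
    · obtain ⟨d, Q, hdm, hdnd, hdroots, hPQ⟩ := step hP heven hpos hpos'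
      have hd0 : d ≠ 0 := hdm.ne_zero
      have hdc0 : d.comp (-X) ≠ 0 := by
        intro h
        apply hd0
        have hcc : (d.comp (-X)).comp (-X) = d := by
          rw [comp_assoc]; simp
        rw [← hcc, h, zero_comp]
      have hQ0 : Q ≠ 0 := by
        rintro rfl; rw [zero_mul] at hPQ; exact hP hPQ
      have hE : (d * d.comp (-X)).comp (-X) = d * d.comp (-X) := by
        rw [mul_comp, comp_assoc]
        simp [mul_comm]
      have hQeven : Q.comp (-X) = Q := by
        have h1 : Q.comp (-X) * (d * d.comp (-X)) = Q * (d * d.comp (-X)) := by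
          conv_lhs => rw [← hE]
          rw [← mul_comp, ← hPQ, heven, hPQ]
        exact mul_right_cancel₀ (mul_ne_zero hd0 hdc0) h1
      have hQpos : ∀ ω : ℝ, ∃ r : ℝ, 0 < r ∧ aeval (Complex.I * ω) Q = (r : ℂ) := by
        intro ω
        obtain ⟨r, hr, hval⟩ := hpos ω
        set w : ℂ := aeval (Complex.I * (ω : ℂ)) d with hw
        have hwne : w ≠ 0 := by
          intro h
          have hlt := hdroots _ h
          simp [Complex.mul_re] at hlt
        have hconj : aeval (Complex.I * (ω : ℂ)) (d.comp (-X)) = (starRingEnd ℂ) w := by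
          rw [aeval_comp]
          simp only [map_neg, aeval_X]
          have hnc : -(Complex.I * (ω : ℂ)) = (starRingEnd ℂ) (Complex.I * (ω : ℂ)) := by
            simp [Complex.ext_iff]
          rw [hnc, Polynomial.aeval_conj, hw]
        have heq : (r : ℂ) = aeval (Complex.I * (ω : ℂ)) Q * (w * (starRingEnd ℂ) w) := by
          rw [← hval, hPQ, map_mul, map_mul, hconj, hw]
        have hns : (0 : ℝ) < Complex.normSq w := Complex.normSq_pos.mpr hwne
        refine ⟨r / Complex.normSq w, by positivity, ?_⟩
        have hnsC : ((Complex.normSq w : ℝ) : ℂ) ≠ 0 := by exact_mod_cast hns.ne'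
        push_cast
        rw [eq_div_iff hnsC, heq, Complex.mul_conj]
      have hdcd : (d.comp (-X)).natDegree = d.natDegree := by
        rw [natDegree_comp]
        simp
      have hlt : Q.natDegree < n := by
        have hmulne : d * d.comp (-X) ≠ 0 := mul_ne_zero hd0 hdc0
        have hnd : P.natDegree = Q.natDegree + (d.natDegree + (d.comp (-X)).natDegree) := by
          rw [hPQ, natDegree_mul hQ0 hmulne, natDegree_mul hd0 hdc0]
        omega
      obtain ⟨q, b, hq, hbm, hbroots, hQfac⟩ :=
        ih Q.natDegree hlt Q le_rfl hQ0 hQeven hQpos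
      refine ⟨q, d * b, hq, hdm.mul hbm, ?_, ?_⟩
      · intro zz hzz
        rw [map_mul] at hzz
        rcases mul_eq_zero.mp hzz with h | h
        · exact hdroots _ h
        · exact hbroots _ h
      · rw [hPQ, hQfac, mul_comp]
        ring

end SpecAux

/-- Spectral factorization `S_y(s) = q · a(s) · a(-s)` underlying the
representation theorem for stationary covariance functions with rational
spectral density: a nonzero even real polynomial taking positive real values
on the imaginary axis factors as `q · a(X) · a(-X)` with `q > 0` and `a`
monic with all complex roots in the open left half-plane. -/
theorem spectral_factorization (P : Polynomial ℝ) (hP : P ≠ 0)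
    (heven : P.comp (-Polynomial.X) = P)
    (hpos : ∀ ω : ℝ, ∃ r : ℝ, 0 < r ∧ Polynomial.aeval (Complex.I * ω) P = (r : ℂ)) :
    ∃ (q : ℝ) (a : Polynomial ℝ), 0 < q ∧ a.Monic ∧
      (∀ z : ℂ, Polynomial.aeval z a = 0 → z.re < 0) ∧
      P = Polynomial.C q * a * a.comp (-Polynomial.X) := by
  exact SpecAux.main_aux P.natDegree P le_rfl hP heven hpos
end
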